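/- arXiv:1110.3198 — 2 statements merged into one kernel-verified Lean document; each statement's English description precedes it below -/
import Mathlib

section
/- Let r and k be integers with 1 ≤ k ≤ r. Then every 2r-regular graph has a 2k-factor, i.e., a spanning subgraph in which every vertex has degree exactly 2k. -/
/-!
Peel closed trails off a graph with all degrees even (a longest trail is closed, since at an end
of an open trail an odd number of its edges meet) and orient each along its direction of
traversal: this orients a `2r`-regular graph so that every vertex has `r` outgoing and `r`
incoming arcs. The out/in incidence relation is then `r`-regular on both sides, so Hall's theorem
gives a permutation `σ` with `v → σ v` an arc for every `v`; asymmetry of the orientation makes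
the edges `{v, σ v}` a 2-factor. Deleting it leaves a `2(r - 1)`-regular graph, and induction
on `r` gives a `2k`-factor for every `k ≤ r`.
-/

open SimpleGraph

/-- The degree of a vertex `v` in the graph `G`. -/
noncomputable def gdeg {V : Type*} (G : SimpleGraph V) (v : V) : ℕ :=
  (G.neighborSet v).ncard

/-- `G` is `m`-edge-connected: it stays connected after deleting any set of
fewer than `m` edges (in particular, for `m ≥ 1`, `G` is connected). -/
def EdgeConn {V : Type*} (G : SimpleGraph V) (m : ℕ) : Prop :=
  ∀ D : Finset (Sym2 V), D.card < m → (G.deleteEdges ↑D).Connected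

/-- `e_G(S, T)`: the number of edges of `G` joining `S` to `T`. -/
noncomputable def eBetween {V : Type*} (G : SimpleGraph V) (S T : Set V) : ℕ :=
  {e ∈ G.edgeSet | ∃ u ∈ S, ∃ w ∈ T, e = s(u, w)}.ncard

/-- The vertex set (in `V`) of a connected component `C` of `G - A`
(the subgraph of `G` induced on the complement of `A`). -/
def compVerts {V : Type*} (G : SimpleGraph V) (A : Set V)
    (C : (G.induce Aᶜ).ConnectedComponent) : Set V :=
  Subtype.val '' C.supp

/-- `τ(S,T)`: the number of components `C` of `G - (S ∪ T)` such that
`e_G(V(C), T) + f(V(C))` is odd. -/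
noncomputable def tauCount {V : Type*} (G : SimpleGraph V) (f : V → ℕ) (S T : Set V) : ℕ :=
  {C : (G.induce (S ∪ T)ᶜ).ConnectedComponent |
    Odd (eBetween G (compVerts G (S ∪ T) C) T + ∑ᶠ v ∈ compVerts G (S ∪ T) C, f v)}.ncard

/-- `F` is a `(g, f)`-parity factor of `G`: a spanning subgraph with
`g v ≤ d_F v ≤ f v` and `d_F v ≡ f v (mod 2)` for all vertices `v`. -/
def IsParityFactor {V : Type*} (G F : SimpleGraph V) (g f : V → ℕ) : Prop :=
  F ≤ G ∧ ∀ v, g v ≤ gdeg F v ∧ gdeg F v ≤ f v ∧ gdeg F v ≡ f v [MOD 2]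


noncomputable def outDeg {α β : Type*} (D : α → β → Prop) (a : α) : ℕ := {b | D a b}.ncard

noncomputable def inDeg {α β : Type*} (D : α → β → Prop) (b : β) : ℕ := {a | D a b}.ncard

section RelationDegrees

variable {α β : Type*} {D E : α → β → Prop}

lemma outDeg_sup [Finite β] (h : ∀ a b, D a b → ¬ E a b) (a : α) :
    outDeg (D ⊔ E) a = outDeg D a + outDeg E a :=
  Set.ncard_union_eq (Set.disjoint_left.mpr fun b => h a b)

lemma inDeg_sup [Finite α] (h : ∀ a b, D a b → ¬ E a b) (b : β) :
    inDeg (D ⊔ E) b = inDeg D b + inDeg E b :=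
  Set.ncard_union_eq (Set.disjoint_left.mpr fun a => h a b)

lemma ncard_setOf_mem_and_eq_countP {l : List α} (hl : l.Nodup) (p : α → Bool) :
    {a | a ∈ l ∧ p a}.ncard = l.countP p := by
  classical
  rw [List.countP_eq_length_filter, ← List.toFinset_card_of_nodup (hl.filter _),
    ← Set.ncard_coe_finset]
  congr 1
  ext a
  simp

lemma outDeg_mem_eq_count [DecidableEq α] {l : List (α × β)} (hl : l.Nodup) (a : α) :
    outDeg (fun x y => (x, y) ∈ l) a = (l.map Prod.fst).count a := by
  rw [List.count, List.countP_map, ← ncard_setOf_mem_and_eq_countP hl, outDeg,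
    ← Set.ncard_image_of_injective _ (Prod.mk_right_injective a)]
  congr 1
  ext ⟨x, y⟩
  aesop

lemma inDeg_mem_eq_count [DecidableEq β] {l : List (α × β)} (hl : l.Nodup) (b : β) :
    inDeg (fun x y => (x, y) ∈ l) b = (l.map Prod.snd).count b := by
  rw [List.count, List.countP_map, ← ncard_setOf_mem_and_eq_countP hl, inDeg,
    ← Set.ncard_image_of_injective _ (Prod.mk_left_injective b)]
  congr 1
  ext ⟨x, y⟩
  aesop

-- Hall's condition holds by double counting the pairs `(a, b)` with `a ∈ s` and `D a b`.
lemma exists_injective_of_le_outDeg_of_inDeg_le [Finite α] [Finite β] {r : ℕ} (hr : 0 < r)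
    (hout : ∀ a, r ≤ outDeg D a) (hin : ∀ b, inDeg D b ≤ r) :
    ∃ f : α → β, Function.Injective f ∧ ∀ a, D a (f a) := by
  classical
  have := Fintype.ofFinite α
  have := Fintype.ofFinite β
  let t a := {b | D a b}.toFinset
  have hall (s : Finset α) : s.card ≤ (s.biUnion t).card := by
    refine Nat.le_of_mul_le_mul_right (Finset.card_mul_le_card_mul D (fun a ha => ?_)
      (fun b _ => ?_)) hr
    · refine (hout a).trans ?_
      rw [outDeg, Set.ncard_eq_toFinset_card']
      refine Finset.card_le_card fun b hb => ?_
      rw [Finset.mem_bipartiteAbove _]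
      exact ⟨Finset.mem_biUnion.mpr ⟨a, ha, hb⟩, by simpa using hb⟩
    · refine le_trans ?_ (hin b)
      rw [inDeg, Set.ncard_eq_toFinset_card']
      exact Finset.card_le_card fun a ha => by simpa using ((Finset.mem_bipartiteBelow _).mp ha).2
  obtain ⟨f, hf, hfD⟩ := (Finset.all_card_le_biUnion_card_iff_existsInjective' t).mp hall
  exact ⟨f, hf, fun a => by simpa [t] using hfD a⟩

end RelationDegrees

namespace SimpleGraph

variable {V : Type*} {G H : SimpleGraph V} {D E : V → V → Prop}

lemma gdeg_eq_ncard_incidenceSet (G : SimpleGraph V) (v : V) :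
    gdeg G v = (G.incidenceSet v).ncard := by
  classical
  exact (Set.ncard_congr' (G.incidenceSetEquivNeighborSet v)).symm

lemma gdeg_sdiff_add_gdeg [Finite V] (h : H ≤ G) (v : V) :
    gdeg (G \ H) v + gdeg H v = gdeg G v := by
  rw [gdeg, gdeg, gdeg, neighborSet_sdiff]
  exact Set.ncard_sdiff_add_ncard_of_subset fun w hw => h hw

lemma gdeg_fromRel_perm (f : Equiv.Perm V) (hfix : ∀ v, f v ≠ v) (hswap : ∀ v, f (f v) ≠ v)
    (v : V) : gdeg (fromRel fun x y => f x = y) v = 2 := by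
  have hnbr : (fromRel fun x y => f x = y).neighborSet v = {f v, f.symm v} := by
    ext w
    rw [mem_neighborSet, fromRel_adj, Set.mem_insert_iff, Set.mem_singleton_iff,
      Equiv.eq_symm_apply]
    constructor
    · rintro ⟨-, h | h⟩
      exacts [Or.inl h.symm, Or.inr h]
    · rintro (h | h)
      · exact ⟨by rintro rfl; exact hfix v h.symm, Or.inl h.symm⟩
      · exact ⟨by rintro rfl; exact hfix v h, Or.inr h⟩
  rw [gdeg, hnbr, Set.ncard_pair fun h => hswap v (by rw [h, Equiv.apply_symm_apply])]

lemma Walk.IsTrail.exists_adj_notMem_edges {u v : V} {p : G.Walk u v} (hp : p.IsTrail)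
    (huv : u ≠ v) (heven : Even (gdeg G u)) : ∃ w, G.Adj w u ∧ s(w, u) ∉ p.edges := by
  classical
  by_contra! hall
  have hinc : G.incidenceSet u = {e | e ∈ p.edges ∧ decide (u ∈ e)} := by
    ext e
    simp only [Set.mem_ofPred_eq, decide_eq_true_eq]
    refine ⟨fun he => ⟨?_, he.2⟩, fun he => ⟨p.edges_subset_edgeSet he.1, he.2⟩⟩
    obtain ⟨w, rfl⟩ := Sym2.mem_iff_exists.mp he.2
    rw [Sym2.eq_swap]
    exact hall w (G.adj_symm he.1)
  have hodd := (hp.even_countP_edges_iff u).not.mpr (by simp [huv])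
  rw [gdeg_eq_ncard_incidenceSet, hinc, ncard_setOf_mem_and_eq_countP hp.edges_nodup] at heven
  exact hodd heven

lemma exists_isCircuit_of_even_gdeg [Finite V] (heven : ∀ v, Even (gdeg G v))
    (hne : G.edgeSet.Nonempty) : ∃ (u : V) (c : G.Walk u u), c.IsCircuit := by
  obtain ⟨e, he⟩ := hne
  induction e using Sym2.ind with | h x y => ?_
  rw [mem_edgeSet] at he
  have : Nonempty V := ⟨x⟩
  obtain ⟨u, v, p, hp, hmax⟩ := Walk.exists_isTrail_forall_isTrail_length_le_length G
  by_cases huv : u = v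
  · subst huv
    refine ⟨u, p, hp, fun hnil => ?_⟩
    have := hmax _ _ (Walk.cons he Walk.nil) (by simp)
    simp [hnil] at this
  · obtain ⟨w, hwu, hw⟩ := hp.exists_adj_notMem_edges huv (heven u)
    have := hmax _ _ (p.cons hwu) (hp.cons hwu hw)
    simp at this

structure IsOrientation (G : SimpleGraph V) (D : V → V → Prop) : Prop where
  adj_of_rel : ∀ ⦃u w⦄, D u w → G.Adj u w
  rel_or_rel_of_adj : ∀ ⦃u w⦄, G.Adj u w → D u w ∨ D w u
  not_rel_of_rel : ∀ ⦃u w⦄, D u w → ¬ D w u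

namespace IsOrientation

lemma gdeg_eq_outDeg_add_inDeg [Finite V] (hD : G.IsOrientation D) (v : V) :
    gdeg G v = outDeg D v + inDeg D v := by
  rw [gdeg, outDeg, inDeg, ← Set.ncard_union_eq (s := {w | D v w}) (t := {w | D w v})
    (Set.disjoint_left.mpr fun w hvw hwv => hD.not_rel_of_rel hvw hwv)]
  congr 1
  ext w
  exact ⟨fun h => hD.rel_or_rel_of_adj h,
    fun h => h.elim (fun h => hD.adj_of_rel h) (fun h => (hD.adj_of_rel h).symm)⟩

lemma sup (hD : G.IsOrientation D) (hE : H.IsOrientation E) (hGH : Disjoint G H) :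
    (G ⊔ H).IsOrientation (D ⊔ E) := by
  have hDE : ∀ ⦃u w⦄, D u w → E w u → False := fun u w hD' hE' =>
    (hGH.le_bot ⟨hD.adj_of_rel hD', (hE.adj_of_rel hE').symm⟩ : (⊥ : SimpleGraph V).Adj u w)
  refine ⟨fun u w h => h.imp (fun h => hD.adj_of_rel h) (fun h => hE.adj_of_rel h), ?_, ?_⟩
  · rintro u w (h | h)
    · exact (hD.rel_or_rel_of_adj h).imp Or.inl Or.inl
    · exact (hE.rel_or_rel_of_adj h).imp Or.inr Or.inr
  · rintro u w (h | h) (h' | h')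
    · exact hD.not_rel_of_rel h h'
    · exact hDE h h'
    · exact hDE h' h
    · exact hE.not_rel_of_rel h h'

end IsOrientation

def IsEulerianOrientation (G : SimpleGraph V) (D : V → V → Prop) : Prop :=
  G.IsOrientation D ∧ ∀ v, outDeg D v = inDeg D v

namespace IsEulerianOrientation

lemma gdeg_eq_two_mul_outDeg [Finite V] (hD : G.IsEulerianOrientation D) (v : V) :
    gdeg G v = 2 * outDeg D v := by
  rw [hD.1.gdeg_eq_outDeg_add_inDeg, ← hD.2 v, two_mul]

lemma sup_of_sdiff [Finite V] (hHG : H ≤ G) (hD : (G \ H).IsEulerianOrientation D)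
    (hE : H.IsEulerianOrientation E) : G.IsEulerianOrientation (D ⊔ E) := by
  have hDE : ∀ u w, D u w → ¬ E u w := fun u w hD' hE' =>
    ((sdiff_adj _ _ _ _).mp (hD.1.adj_of_rel hD')).2 (hE.1.adj_of_rel hE')
  refine ⟨sdiff_sup_cancel hHG ▸ hD.1.sup hE.1 disjoint_sdiff_self_left, fun v => ?_⟩
  rw [outDeg_sup hDE, inDeg_sup hDE, hD.2, hE.2]

end IsEulerianOrientation

namespace Walk

variable {u v : V}

def dartRel (c : G.Walk u v) (x y : V) : Prop := (x, y) ∈ c.darts.map Dart.toProd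

lemma IsTrail.nodup_map_toProd_darts {c : G.Walk u v} (hc : c.IsTrail) :
    (c.darts.map Dart.toProd).Nodup :=
  (hc.edges_nodup.of_map _).map Dart.toProd_injective

lemma IsTrail.isOrientation_dartRel {c : G.Walk u v} (hc : c.IsTrail) :
    (fromEdgeSet {e | e ∈ c.edges}).IsOrientation c.dartRel := by
  refine ⟨?_, ?_, ?_⟩
  · rintro x y hxy
    obtain ⟨⟨_, hadj⟩, hd, rfl⟩ := List.mem_map.mp hxy
    exact (fromEdgeSet_adj _).mpr ⟨List.mem_map_of_mem (f := Dart.edge) hd, hadj.ne⟩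
  · rintro x y hxy
    obtain ⟨⟨⟨x', y'⟩, _⟩, hd, he⟩ := List.mem_map.mp ((fromEdgeSet_adj _).mp hxy).1
    rcases Sym2.eq_iff.mp he with ⟨rfl, rfl⟩ | ⟨rfl, rfl⟩
    · exact Or.inl (List.mem_map_of_mem hd)
    · exact Or.inr (List.mem_map_of_mem hd)
  · rintro x y hxy hyx
    obtain ⟨d, hd, hdxy⟩ := List.mem_map.mp hxy
    obtain ⟨d', hd', hdyx⟩ := List.mem_map.mp hyx
    have hedge : d.edge = d'.edge := by
      rw [Dart.edge, Dart.edge, hdxy, hdyx, Sym2.eq_swap]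
    have := congrArg Dart.toProd (List.inj_on_of_nodup_map hc.edges_nodup hd hd' hedge)
    rw [hdxy, hdyx, Prod.mk.injEq] at this
    exact d.adj.ne (by rw [hdxy]; exact this.1)

lemma IsTrail.isEulerianOrientation_dartRel {c : G.Walk u u} (hc : c.IsTrail) :
    (fromEdgeSet {e | e ∈ c.edges}).IsEulerianOrientation c.dartRel := by
  classical
  refine ⟨hc.isOrientation_dartRel, fun x => ?_⟩
  have hperm : (c.darts.map (·.fst)).Perm (c.darts.map (·.snd)) := by
    rw [← List.perm_cons u, ← (List.perm_append_singleton _ _).congr_left,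
      map_fst_darts_append, cons_map_snd_darts]
  unfold dartRel
  rw [outDeg_mem_eq_count hc.nodup_map_toProd_darts,
    inDeg_mem_eq_count hc.nodup_map_toProd_darts, List.map_map, List.map_map]
  exact hperm.count_eq x

end Walk

lemma exists_isEulerianOrientation [Finite V] (heven : ∀ v, Even (gdeg G v)) :
    ∃ D, G.IsEulerianOrientation D := by
  induction hn : G.edgeSet.ncard using Nat.strong_induction_on generalizing G with
  | _ n ih => ?_
  by_cases hne : G.edgeSet.Nonempty
  swap
  · exact ⟨⊥, ⟨fun _ _ h => h.elim, fun u w h => (hne ⟨s(u, w), h⟩).elim, fun _ _ h => h.elim⟩,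
      fun v => rfl⟩
  obtain ⟨u, c, hc⟩ := exists_isCircuit_of_even_gdeg heven hne
  set T := fromEdgeSet {e | e ∈ c.edges}
  have hTG : T ≤ G := fun x y h =>
    G.mem_edgeSet.mp (c.edges_subset_edgeSet ((fromEdgeSet_adj _).mp h).1)
  have hT := hc.isTrail.isEulerianOrientation_dartRel
  have heven' (v : V) : Even (gdeg (G \ T) v) := by
    have := gdeg_sdiff_add_gdeg hTG v
    rw [hT.gdeg_eq_two_mul_outDeg] at this
    exact (Nat.even_add.mp (this ▸ heven v)).mpr (even_two_mul _)
  have hlt : (G \ T).edgeSet.ncard < n := by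
    obtain ⟨e, he⟩ := List.exists_mem_of_ne_nil _ (Walk.edges_eq_nil.not.mpr hc.not_nil)
    have heG := c.edges_subset_edgeSet he
    refine hn ▸ Set.ncard_lt_ncard ((Set.ssubset_iff_of_subset (edgeSet_mono sdiff_le)).mpr
      ⟨e, heG, fun he' => ?_⟩)
    rw [edgeSet_sdiff, edgeSet_fromEdgeSet] at he'
    exact he'.2 ⟨he, G.not_isDiag_of_mem_edgeSet heG⟩
  obtain ⟨D, hD⟩ := ih _ hlt heven' rfl
  exact ⟨_, hD.sup_of_sdiff hTG hT⟩

lemma exists_two_factor [Finite V] {r : ℕ} (hr : 0 < r) (hreg : ∀ v, gdeg G v = 2 * r) :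
    ∃ F ≤ G, ∀ v, gdeg F v = 2 := by
  obtain ⟨D, hD⟩ := exists_isEulerianOrientation (G := G) fun v => hreg v ▸ even_two_mul r
  have hout (v : V) : outDeg D v = r := by
    have := hD.gdeg_eq_two_mul_outDeg v
    rw [hreg] at this
    omega
  obtain ⟨f, hf, hfD⟩ := exists_injective_of_le_outDeg_of_inDeg_le hr (fun v => (hout v).ge)
    (fun v => (hD.2 v ▸ hout v).le)
  let σ := Equiv.ofBijective f (Finite.injective_iff_bijective.mp hf)
  refine ⟨fromRel fun x y => σ x = y, fun x y h => ?_, gdeg_fromRel_perm σ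
    (fun v => (hD.1.adj_of_rel (hfD v)).ne.symm)
    (fun v h => hD.1.not_rel_of_rel (hfD v) ((congrArg (D (f v)) h).mp (hfD (f v))))⟩
  rcases ((fromRel_adj _ _ _).mp h).2 with rfl | rfl
  exacts [hD.1.adj_of_rel (hfD x), (hD.1.adj_of_rel (hfD y)).symm]

end SimpleGraph

theorem petersen_two_k_factor_general (r k : ℕ) (hkr : k ≤ r)
    {V : Type*} [Fintype V] (G : SimpleGraph V)
    (hreg : ∀ v, gdeg G v = 2 * r) :
    ∃ H : SimpleGraph V, H ≤ G ∧ ∀ v, gdeg H v = 2 * k := by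
  induction r generalizing G with
  | zero => exact ⟨G, le_rfl, by simpa [Nat.le_zero.mp hkr] using hreg⟩
  | succ r ih =>
    obtain rfl | hkr := eq_or_lt_of_le hkr
    · exact ⟨G, le_rfl, hreg⟩
    obtain ⟨F, hFG, hF⟩ := exists_two_factor r.succ_pos hreg
    have hreg' (v : V) : gdeg (G \ F) v = 2 * r := by
      have := gdeg_sdiff_add_gdeg hFG v
      rw [hreg, hF] at this
      omega
    obtain ⟨H, hHG, hH⟩ := ih (Nat.lt_succ_iff.mp hkr) (G \ F) hreg'
    exact ⟨H, hHG.trans sdiff_le, hH⟩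

/-- Petersen: every 2r-regular graph has a 2k-factor, for 1 ≤ k ≤ r. -/
theorem petersen_two_k_factor (r k : ℕ) (hk : 1 ≤ k) (hkr : k ≤ r)
    {V : Type*} [Fintype V] (G : SimpleGraph V)
    (hreg : ∀ v, gdeg G v = 2 * r) :
    ∃ H : SimpleGraph V, H ≤ G ∧ ∀ v, gdeg H v = 2 * k :=
  petersen_two_k_factor_general r k hkr G hreg
end

section
/- Let G be a graph and let g, f : V(G) → Z⁺ satisfy g(v) ≤ f(v) and g(v) ≡ f(v) (mod 2) for every vertex v. Then for all disjoint subsets S, T of V(G), the quantity δ(S,T) := f(S) + Σ_{x∈T} d_G(x) − g(T) − e_G(S,T) − τ(S,T) satisfies δ(S,T) ≡ f(V(G)) (mod 2), where τ(S,T) is the number of components C of G − (S ∪ T) with e_G(V(C),T) + f(V(C)) odd. -/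
open SimpleGraph

/-!
Work modulo 2. With `U` the vertices outside `S ∪ T`, the degree sum over `T` counts each edge
inside `T` twice and each edge leaving `T` once, so it is `e(S,T) + e(U,T)` mod 2. Since `τ` counts
the components `C` of `G - (S ∪ T)` with `e(C,T) + f(C)` odd, and these components partition `U`,
`τ ≡ e(U,T) + f(U)`. Together with `g(T) ≡ f(T)`, everything but `f(S) - f(T) - f(U)` cancels in `δ`,
and this is `f(V)` mod 2.
-/

theorem Set.ncard_setOf_odd_modEq {α : Type*} [Finite α] (p : α → ℕ) :
    {a | Odd (p a)}.ncard ≡ ∑ᶠ a, p a [MOD 2] := by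
  classical
  have := Fintype.ofFinite α
  rw [Set.ncard_eq_toFinset_card', Set.toFinset_ofPred, Finset.card_filter,
    finsum_eq_sum_of_fintype]
  refine Nat.ModEq.sum fun a _ ↦ ?_
  split_ifs with h
  · exact (Nat.odd_iff.mp h).symm
  · exact (Nat.not_odd_iff.mp h).symm

theorem Finset.sum_univ_eq_finsum_mem_add_add_compl {α M : Type*} [Fintype α]
    [AddCommMonoid M] {S T : Set α} (hST : Disjoint S T) (φ : α → M) :
    ∑ a, φ a = ∑ᶠ a ∈ S, φ a + ∑ᶠ a ∈ T, φ a + ∑ᶠ a ∈ (S ∪ T)ᶜ, φ a := by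
  rw [← finsum_eq_sum_of_fintype, ← finsum_mem_univ, ← Set.union_compl_self (S ∪ T),
    finsum_mem_union disjoint_compl_right (Set.toFinite _) (Set.toFinite _),
    finsum_mem_union hST (Set.toFinite _) (Set.toFinite _)]

namespace SimpleGraph

variable {V : Type*} (G : SimpleGraph V)

theorem eBetween_comm (A B : Set V) : eBetween G A B = eBetween G B A := by
  unfold eBetween
  congr 1
  ext e
  constructor <;> rintro ⟨he, u, hu, w, hw, rfl⟩ <;> exact ⟨he, w, hw, u, hu, Sym2.eq_swap⟩

theorem compVerts_subset (A : Set V) (C : (G.induce Aᶜ).ConnectedComponent) :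
    compVerts G A C ⊆ Aᶜ :=
  Set.image_subset_iff.mpr fun x _ ↦ x.2

variable [Finite V]

theorem eBetween_eq_finsum_ncard {A B : Set V} (h : Disjoint A B) :
    eBetween G A B = ∑ᶠ u ∈ A, (G.neighborSet u ∩ B).ncard := by
  have hedges : {e ∈ G.edgeSet | ∃ u ∈ A, ∃ w ∈ B, e = s(u, w)}
      = ⋃ u ∈ A, (fun w ↦ s(u, w)) '' (G.neighborSet u ∩ B) := by
    ext e
    simp only [Set.mem_ofPred_eq, Set.mem_iUnion, Set.mem_image, Set.mem_inter_iff,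
      mem_neighborSet]
    constructor
    · rintro ⟨he, u, hu, w, hw, rfl⟩
      exact ⟨u, hu, w, ⟨he, hw⟩, rfl⟩
    · rintro ⟨u, hu, w, ⟨huw, hw⟩, rfl⟩
      exact ⟨huw, u, hu, w, hw, rfl⟩
  rw [eBetween, hedges, (Set.toFinite A).ncard_biUnion (fun _ _ ↦ Set.toFinite _)]
  · exact finsum_mem_congr rfl fun u _ ↦
      Set.ncard_image_of_injective _ fun w w' h ↦ Sym2.congr_right.mp h
  · rintro u hu u' hu' huu'
    refine Set.disjoint_left.mpr ?_
    rintro _ ⟨w, ⟨-, hw⟩, rfl⟩ ⟨w', ⟨-, -⟩, heq⟩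
    rcases Sym2.eq_iff.mp heq with ⟨h1, -⟩ | ⟨h1, -⟩
    · exact huu' h1.symm
    · exact Set.disjoint_left.mp h hu' (h1 ▸ hw)

theorem eBetween_union_left {A B C : Set V} (hAB : Disjoint A B) (hC : Disjoint (A ∪ B) C) :
    eBetween G (A ∪ B) C = eBetween G A C + eBetween G B C := by
  obtain ⟨hAC, hBC⟩ := Set.disjoint_union_left.mp hC
  rw [eBetween_eq_finsum_ncard G hC, eBetween_eq_finsum_ncard G hAC,
    eBetween_eq_finsum_ncard G hBC, finsum_mem_union hAB (Set.toFinite _) (Set.toFinite _)]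

/-- Handshake lemma for the subgraph induced on `T`. -/
theorem even_finsum_ncard_neighborSet_inter (T : Set V) :
    Even (∑ᶠ x ∈ T, (G.neighborSet x ∩ T).ncard) := by
  classical
  have := Fintype.ofFinite T
  have hdeg : ∀ x : T, (G.neighborSet x ∩ T).ncard = (G.induce T).degree x := fun x ↦ by
    have : (G.induce T).neighborSet x = Subtype.val ⁻¹' G.neighborSet x := rfl
    rw [← card_neighborSet_eq_degree, ← Nat.card_eq_fintype_card, Nat.card_coe_set_eq,
      ← Set.ncard_image_of_injective _ Subtype.val_injective, this, Subtype.image_preimage_coe,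
      Set.inter_comm]
  rw [← finsum_set_coe_eq_finsum_mem, finsum_congr hdeg, finsum_eq_sum_of_fintype,
    sum_degrees_eq_twice_card_edges]
  exact even_two_mul _

theorem finsum_gdeg_modEq (T : Set V) :
    ∑ᶠ x ∈ T, gdeg G x ≡ eBetween G Tᶜ T [MOD 2] := by
  have hsplit : ∀ x, gdeg G x = (G.neighborSet x ∩ T).ncard + (G.neighborSet x ∩ Tᶜ).ncard :=
    fun x ↦ (Set.ncard_inter_add_ncard_sdiff_eq_ncard _ _ (Set.toFinite _)).symm
  obtain ⟨k, hk⟩ := even_finsum_ncard_neighborSet_inter G T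
  rw [finsum_mem_congr rfl fun x _ ↦ hsplit x, finsum_mem_add_distrib (Set.toFinite _),
    eBetween_comm, eBetween_eq_finsum_ncard G disjoint_compl_right, hk]
  unfold Nat.ModEq
  omega

theorem finsum_gdeg_modEq_of_disjoint {S T : Set V} (hST : Disjoint S T) :
    ∑ᶠ x ∈ T, gdeg G x ≡ eBetween G S T + eBetween G (S ∪ T)ᶜ T [MOD 2] := by
  have hTc : Tᶜ = S ∪ (S ∪ T)ᶜ := by
    ext x
    have : x ∈ S → x ∉ T := fun h ↦ Set.disjoint_left.mp hST h
    simp only [Set.mem_compl_iff, Set.mem_union]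
    tauto
  have hS : Disjoint S (S ∪ T)ᶜ := disjoint_compl_right.mono_left Set.subset_union_left
  rw [← eBetween_union_left G hS (hTc ▸ disjoint_compl_left), ← hTc]
  exact finsum_gdeg_modEq G T

theorem finsum_compVerts {M : Type*} [AddCommMonoid M] (A : Set V) (φ : V → M) :
    ∑ᶠ C, ∑ᶠ v ∈ compVerts G A C, φ v = ∑ᶠ v ∈ Aᶜ, φ v := by
  have hunion : ⋃ C, compVerts G A C = Aᶜ := by
    simp only [compVerts, ← Set.image_iUnion, iUnion_connectedComponentSupp, Set.image_univ,
      Subtype.range_coe]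
  conv_rhs => rw [← hunion]
  rw [finsum_mem_iUnion _ fun _ ↦ Set.toFinite _]
  exact fun C D hCD ↦ Set.disjoint_image_of_injective Subtype.val_injective
    (pairwise_disjoint_supp_connectedComponent _ hCD)

theorem tauCount_modEq (f : V → ℕ) (S T : Set V) :
    tauCount G f S T ≡ eBetween G (S ∪ T)ᶜ T + ∑ᶠ v ∈ (S ∪ T)ᶜ, f v [MOD 2] := by
  have hT : Disjoint (S ∪ T)ᶜ T := disjoint_compl_left.mono_right Set.subset_union_right
  have hC : ∀ C, eBetween G (compVerts G (S ∪ T) C) T + ∑ᶠ v ∈ compVerts G (S ∪ T) C, f v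
      = ∑ᶠ v ∈ compVerts G (S ∪ T) C, ((G.neighborSet v ∩ T).ncard + f v) := fun C ↦ by
    rw [eBetween_eq_finsum_ncard G (hT.mono_left (compVerts_subset G _ C)),
      finsum_mem_add_distrib (Set.toFinite _)]
  rw [tauCount]
  refine (Set.ncard_setOf_odd_modEq _).trans ?_
  rw [finsum_congr hC, finsum_compVerts, finsum_mem_add_distrib (Set.toFinite _),
    eBetween_eq_finsum_ncard G hT]

end SimpleGraph

theorem lovasz_delta_parity_general {V : Type*} [Fintype V] (G : SimpleGraph V)
    (g f : V → ℕ) (hpar : ∀ v, g v ≡ f v [MOD 2]) :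
    ∀ S T : Set V, Disjoint S T →
      (∑ᶠ v ∈ S, (f v : ℤ)) + (∑ᶠ x ∈ T, (gdeg G x : ℤ))
          - (∑ᶠ v ∈ T, (g v : ℤ)) - (eBetween G S T : ℤ)
          - (tauCount G f S T : ℤ) ≡ (∑ v : V, (f v : ℤ)) [ZMOD 2] := by
  intro S T hST
  have hdeg := (ZMod.natCast_eq_natCast_iff _ _ _).mpr (finsum_gdeg_modEq_of_disjoint G hST)
  have hτ := (ZMod.natCast_eq_natCast_iff _ _ _).mpr (tauCount_modEq G f S T)
  have hg : ∑ᶠ v ∈ T, (g v : ZMod 2) = ∑ᶠ v ∈ T, (f v : ZMod 2) :=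
    finsum_mem_congr rfl fun v _ ↦ (ZMod.natCast_eq_natCast_iff _ _ _).mpr (hpar v)
  have hfV := Finset.sum_univ_eq_finsum_mem_add_add_compl hST fun v ↦ (f v : ZMod 2)
  rw [← Nat.cast_finsum_mem (Set.toFinite S), ← Nat.cast_finsum_mem (Set.toFinite T),
    ← Nat.cast_finsum_mem (Set.toFinite T)]
  refine (ZMod.intCast_eq_intCast_iff _ _ 2).mp ?_
  simp only [Int.cast_sub, Int.cast_add, Int.cast_natCast, Int.cast_sum]
  push_cast [Nat.cast_finsum_mem (Set.toFinite _)] at hdeg hτ ⊢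
  have h2 : (2 : ZMod 2) = 0 := rfl
  linear_combination hdeg - hg - hτ - hfV
    - (∑ᶠ v ∈ T, (f v : ZMod 2) + ∑ᶠ v ∈ (S ∪ T)ᶜ, (f v : ZMod 2)) * h2

/-- The Lovász deficiency δ(S,T) is congruent to f(V(G)) modulo 2. -/
theorem lovasz_delta_parity {V : Type*} [Fintype V] (G : SimpleGraph V)
    (g f : V → ℕ) (hgpos : ∀ v, 1 ≤ g v) (hgf : ∀ v, g v ≤ f v)
    (hpar : ∀ v, g v ≡ f v [MOD 2]) :
    ∀ S T : Set V, Disjoint S T →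
      (∑ᶠ v ∈ S, (f v : ℤ)) + (∑ᶠ x ∈ T, (gdeg G x : ℤ))
          - (∑ᶠ v ∈ T, (g v : ℤ)) - (eBetween G S T : ℤ)
          - (tauCount G f S T : ℤ) ≡ (∑ v : V, (f v : ℤ)) [ZMOD 2] :=
  lovasz_delta_parity_general G g f hpar
end
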